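/- In the setting of the GUCB policy with ν_n ≥ 4γ̄² log n, for each k ≠ k*: E[T_k(n)²] ≤ (8ν_n/Δ_k² + 5)², for all n. -/

import Mathlib

/-!
Let `Δ = μ kstar - μ k` and `u = ⌊8 ν n / Δ²⌋₊ + 1`. Once arm `k` has `u` pulls, it can be pulled
at time `t + 1` only if the confidence interval of arm `kstar` or of arm `k`, built from some
number `s ≤ t` of samples, misses its mean: otherwise the GUCB indices satisfy
`μ kstar ≤ index kstar ≤ index k < μ k + 2 √(2 ν (t+1) / T t k)`, i.e. `T t k < 8 ν (t+1) / Δ² < u`.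
By Hoeffding's inequality for sub-Gaussian sums and `ν (t+1) ≥ 4 γbar² log (t+1)`, such a miss has
probability at most `4t / (t+1)⁴`. So `T n k ≤ u + N`, where `N` counts these late pulls, and
`(u + N)² ≤ u² + ∑ (2u + 2t + 1)` over the (distinct) late pull times `t`. Taking expectations,
the series telescopes to `E[(T n k)²] ≤ u² + 4u + 8 ≤ (8 ν n / Δ² + 5)²`.
-/

open MeasureTheory ProbabilityTheory Finset
open scoped NNReal

section PullCount

variable {f : ℕ → ℕ} {p : ℕ → Prop} [DecidablePred p] {K : ℕ}

lemma one_le_and_add_le_of_succ_eq_add_ite (h₀ : f K = 1)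
    (hf : ∀ m, K ≤ m → f (m + 1) = f m + if p m then 1 else 0) :
    ∀ t, K ≤ t → 1 ≤ f t ∧ f t + K ≤ t + 1 := by
  intro t ht
  induction t, ht using Nat.le_induction with
  | base => omega
  | succ m hm ih => rw [hf m hm]; split_ifs <;> omega

lemma le_add_card_filter_of_succ_eq_add_ite {u : ℕ} (hu : f K ≤ u)
    (hf : ∀ m, K ≤ m → f (m + 1) = f m + if p m then 1 else 0) :
    ∀ n, K ≤ n → f n ≤ u + #{t ∈ Ico K n | p t ∧ u ≤ f t} := by
  intro n hn
  induction n, hn using Nat.le_induction with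
  | base => simpa using hu
  | succ m hm ih =>
    rw [hf m hm, Nat.Ico_succ_right_eq_insert_Ico hm, filter_insert]
    have hm_notMem : m ∉ {t ∈ Ico K m | p t ∧ u ≤ f t} := by simp
    by_cases hp : p m
    · by_cases hfu : u ≤ f m
      · rw [if_pos hp, if_pos ⟨hp, hfu⟩, card_insert_of_notMem hm_notMem]; omega
      · rw [if_pos hp, if_neg (hfu ·.2)]; omega
    · rw [if_neg hp, if_neg (hp ·.1)]; omega

end PullCount

lemma card_sq_le_sum_two_mul_add_one (s : Finset ℕ) : #s ^ 2 ≤ ∑ t ∈ s, (2 * t + 1) := by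
  induction s using Finset.induction_on_max with
  | empty => simp
  | insert a s ha ih =>
    have has : a ∉ s := fun h => lt_irrefl a (ha a h)
    have hcard : #s ≤ a := by
      simpa using card_le_card (fun t ht => mem_range.2 (ha t ht) : s ⊆ range a)
    rw [card_insert_of_notMem has, sum_insert has]
    nlinarith

lemma sq_le_sq_add_sum_of_le_add_card {z u : ℕ} {s : Finset ℕ} (h : z ≤ u + #s) :
    z ^ 2 ≤ u ^ 2 + ∑ t ∈ s, (2 * u + 2 * t + 1) := by
  have hs := card_sq_le_sum_two_mul_add_one s
  have hsum : ∑ t ∈ s, (2 * u + 2 * t + 1) = 2 * u * #s + ∑ t ∈ s, (2 * t + 1) := by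
    simp only [add_assoc, sum_add_distrib, sum_const, smul_eq_mul]; ring
  calc z ^ 2 ≤ (u + #s) ^ 2 := Nat.pow_le_pow_left h 2
    _ ≤ u ^ 2 + ∑ t ∈ s, (2 * u + 2 * t + 1) := by rw [hsum]; nlinarith

lemma sum_Ico_mul_four_mul_div_le {K : ℕ} (hK : 1 ≤ K) (n : ℕ) {u : ℝ} (hu : 0 ≤ u) :
    ∑ t ∈ Ico K n, (2 * u + 2 * t + 1) * (4 * t / (t + 1) ^ 4) ≤ 4 * u + 8 := by
  have hterm : ∀ t ∈ Ico K n, (2 * u + 2 * t + 1) * (4 * t / (t + 1) ^ 4) ≤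
      (4 * u + 8) * ((t : ℝ)⁻¹ - ((t : ℝ) + 1)⁻¹) := by
    intro t ht
    have ht : (1 : ℝ) ≤ t := by exact_mod_cast hK.trans (mem_Ico.1 ht).1
    field_simp
    nlinarith [mul_nonneg hu (by positivity : (0:ℝ) ≤ t ^ 3)]
  rcases le_or_gt K n with hKn | hnK
  · have htelescope := sum_Ico_sub (fun t : ℕ => -(t : ℝ)⁻¹) hKn
    push_cast [neg_sub_neg] at htelescope
    calc _ ≤ ∑ t ∈ Ico K n, (4 * u + 8) * ((t : ℝ)⁻¹ - ((t : ℝ) + 1)⁻¹) := sum_le_sum hterm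
      _ = (4 * u + 8) * ((K : ℝ)⁻¹ - (n : ℝ)⁻¹) := by
        rw [← mul_sum, htelescope]
      _ ≤ 4 * u + 8 := by
        have : (K : ℝ)⁻¹ ≤ 1 := inv_le_one_of_one_le₀ (by exact_mod_cast hK)
        nlinarith [inv_nonneg.2 (Nat.cast_nonneg (α := ℝ) n)]
  · rw [Ico_eq_empty_of_le hnK.le, sum_empty]; linarith

lemma exp_neg_div_le_inv_pow_four {c v x : ℝ} (hc : 0 < c) (hx : 0 < x)
    (h : 4 * c * Real.log x ≤ v) : Real.exp (-v / c) ≤ (x ^ 4)⁻¹ := by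
  rw [← Real.exp_log (pow_pos hx 4), ← Real.exp_neg, Real.exp_le_exp, Real.log_pow, neg_div,
    neg_le_neg_iff, le_div_iff₀ hc]
  push_cast
  linarith

section SampleMean

variable {Ω : Type*}

noncomputable def sampleMean (Y : ℕ → Ω → ℝ) (s : ℕ) (ω : Ω) : ℝ :=
  (∑ j ∈ range s, Y j ω) / s

/-- Taking all sample sizes `s ≤ t` at once lets a random pull count be substituted for `s`. -/
def confidenceMiss (Y : ℕ → Ω → ℝ) (m v : ℝ) (t : ℕ) : Set Ω :=
  ⋃ s ∈ Icc 1 t, {ω | √(2 * v / s) ≤ |sampleMean Y s ω - m|}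

lemma sq_sub_mul_lt_of_notMem_confidenceMiss {K : ℕ} {μ : Fin K → ℝ} {X : Fin K → ℕ → Ω → ℝ}
    {ν : ℕ → ℝ} {T : ℕ → Fin K → Ω → ℕ} {I : ℕ → Ω → Fin K}
    (hinit : ∀ k ω, T K k ω = 1)
    (hTrec : ∀ n, K ≤ n → ∀ k ω,
      T (n + 1) k ω = T n k ω + if I (n + 1) ω = k then 1 else 0)
    (hargmax : ∀ n, K ≤ n → ∀ ω k,
      (∑ j ∈ Finset.range (T n k ω), X k j ω) / (T n k ω : ℝ) +
          Real.sqrt (2 * ν (n + 1) / (T n k ω : ℝ)) ≤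
        (∑ j ∈ Finset.range (T n (I (n + 1) ω) ω), X (I (n + 1) ω) j ω) /
            (T n (I (n + 1) ω) ω : ℝ) +
          Real.sqrt (2 * ν (n + 1) / (T n (I (n + 1) ω) ω : ℝ)))
    {kstar k : Fin K} (hle : μ k ≤ μ kstar) {t : ℕ} (ht : K ≤ t) {ω : Ω} (hI : I (t + 1) ω = k)
    (hgood : ω ∉ confidenceMiss (X kstar) (μ kstar) (ν (t + 1)) t ∪
      confidenceMiss (X k) (μ k) (ν (t + 1)) t) :
    (μ kstar - μ k) ^ 2 * T t k ω < 8 * ν (t + 1) := by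
  have hT : ∀ j, 1 ≤ T t j ω ∧ T t j ω ≤ t := fun j => by
    have := one_le_and_add_le_of_succ_eq_add_ite (f := fun t => T t j ω)
      (p := fun m => I (m + 1) ω = j) (hinit j ω) (fun m hm => hTrec m hm j ω) t ht
    omega
  have hinside : ∀ j, ω ∉ confidenceMiss (X j) (μ j) (ν (t + 1)) t →
      |sampleMean (X j) (T t j ω) ω - μ j| < √(2 * ν (t + 1) / T t j ω) := fun j hj =>
    not_le.1 fun hmiss => hj (Set.mem_iUnion₂.2 ⟨T t j ω, mem_Icc.2 (hT j), hmiss⟩)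
  have hstar := abs_lt.1 (hinside kstar fun h => hgood (Or.inl h))
  have hk := abs_lt.1 (hinside k fun h => hgood (Or.inr h))
  have harg := hargmax t ht ω kstar
  rw [hI] at harg
  set r := √(2 * ν (t + 1) / T t k ω)
  have hgap : μ kstar - μ k < 2 * r := by
    simp only [sampleMean] at hstar hk
    linarith
  have hr : r ^ 2 = 2 * ν (t + 1) / T t k ω :=
    Real.sq_sqrt (Real.sqrt_pos.1 (by linarith)).le
  have hTpos : (0 : ℝ) < T t k ω := by exact_mod_cast (hT k).1
  calc (μ kstar - μ k) ^ 2 * T t k ω < (2 * r) ^ 2 * T t k ω := by gcongr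
    _ = 8 * ν (t + 1) := by rw [mul_pow, hr]; field_simp; ring

variable [MeasurableSpace Ω] {P : Measure Ω}

lemma hasSubgaussianMGF_of_lintegral_exp_le {Y : Ω → ℝ} (hY : Measurable Y) {c : ℝ≥0}
    (h : ∀ t : ℝ, ∫⁻ ω, ENNReal.ofReal (Real.exp (t * Y ω)) ∂P ≤
      ENNReal.ofReal (Real.exp (c * t ^ 2 / 2))) :
    HasSubgaussianMGF Y c P where
  integrable_exp_mul t := by
    refine ⟨(Real.measurable_exp.comp (hY.const_mul t)).aestronglyMeasurable, ?_⟩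
    rw [hasFiniteIntegral_iff_ofReal (ae_of_all _ fun ω => (Real.exp_pos _).le)]
    exact (h t).trans_lt ENNReal.ofReal_lt_top
  mgf_le t := by
    rw [mgf, integral_eq_lintegral_of_nonneg_ae (ae_of_all _ fun ω => (Real.exp_pos _).le)
      (Real.measurable_exp.comp (hY.const_mul t)).aestronglyMeasurable]
    exact ENNReal.toReal_le_of_le_ofReal (Real.exp_pos _).le (h t)

lemma measureReal_le_sampleMean_le {Y : ℕ → Ω → ℝ} (hindep : iIndepFun Y P) {m : ℝ} {c : ℝ≥0}
    (hY : ∀ j, HasSubgaussianMGF (fun ω => Y j ω - m) c P) {s : ℕ} (hs : 0 < s) {w : ℝ}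
    (hw : 0 ≤ w) :
    P.real {ω | m + √(2 * w / s) ≤ sampleMean Y s ω} ≤ Real.exp (-w / c) := by
  have hs' : (0 : ℝ) < s := Nat.cast_pos.2 hs
  have hε : 0 ≤ s * √(2 * w / s) := by positivity
  have hcenter : iIndepFun (fun j ω => Y j ω - m) P :=
    hindep.comp (fun _ y => y - m) fun _ => measurable_sub_const m
  have hset : {ω | m + √(2 * w / s) ≤ sampleMean Y s ω} =
      {ω | s * √(2 * w / s) ≤ ∑ j ∈ range s, (Y j ω - m)} := by
    ext ω
    simp only [Set.mem_ofPred_eq, sampleMean, sum_sub_distrib, sum_const, card_range,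
      nsmul_eq_mul, le_div_iff₀ hs']
    constructor <;> intro h <;> linarith
  have hexp : -(s * √(2 * w / s)) ^ 2 / (2 * s * c) = -w / c := by
    rw [mul_pow, Real.sq_sqrt (by positivity)]
    field_simp
  rw [hset, ← hexp]
  exact HasSubgaussianMGF.measure_sum_range_ge_le_of_iIndepFun hcenter (fun j _ => hY j) hε

lemma measureReal_sampleMean_add_le {Y : ℕ → Ω → ℝ} (hindep : iIndepFun Y P) {m : ℝ} {c : ℝ≥0}
    (hY : ∀ j, HasSubgaussianMGF (fun ω => Y j ω - m) c P) {s : ℕ} (hs : 0 < s) {w : ℝ}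
    (hw : 0 ≤ w) :
    P.real {ω | sampleMean Y s ω + √(2 * w / s) ≤ m} ≤ Real.exp (-w / c) := by
  have hneg : ∀ j, HasSubgaussianMGF (fun ω => -Y j ω - -m) c P := fun j =>
    (hY j).neg.congr (ae_of_all _ fun ω => by simp only [Pi.neg_apply]; ring)
  convert measureReal_le_sampleMean_le (hindep.comp (fun _ y => -y) fun _ => measurable_neg)
    hneg hs hw using 3
  ext ω
  simp only [sampleMean, Function.comp_apply, sum_neg_distrib, neg_div]
  constructor <;> intro h <;> linarith

lemma measureReal_le_abs_sampleMean_sub_le {Y : ℕ → Ω → ℝ} (hindep : iIndepFun Y P) {m : ℝ}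
    {c : ℝ≥0} (hY : ∀ j, HasSubgaussianMGF (fun ω => Y j ω - m) c P) {s : ℕ} (hs : 0 < s)
    {w : ℝ} (hw : 0 ≤ w) :
    P.real {ω | √(2 * w / s) ≤ |sampleMean Y s ω - m|} ≤ 2 * Real.exp (-w / c) := by
  have hsplit : {ω | √(2 * w / s) ≤ |sampleMean Y s ω - m|} ⊆
      {ω | sampleMean Y s ω + √(2 * w / s) ≤ m} ∪ {ω | m + √(2 * w / s) ≤ sampleMean Y s ω} := by
    intro ω hω
    simp only [Set.mem_union, Set.mem_ofPred_eq] at hω ⊢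
    rcases le_abs'.1 hω with h | h
    · left; linarith
    · right; linarith
  have := hindep.isProbabilityMeasure
  calc _ ≤ _ := measureReal_mono hsplit
    _ ≤ _ := measureReal_union_le _ _
    _ ≤ _ := add_le_add (measureReal_sampleMean_add_le hindep hY hs hw)
        (measureReal_le_sampleMean_le hindep hY hs hw)
    _ = _ := by ring

lemma measureReal_confidenceMiss_le {Y : ℕ → Ω → ℝ} (hindep : iIndepFun Y P) {m : ℝ}
    {c : ℝ≥0} (hY : ∀ j, HasSubgaussianMGF (fun ω => Y j ω - m) c P) {v : ℝ} (hv : 0 ≤ v)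
    (t : ℕ) :
    P.real (confidenceMiss Y m v t) ≤ 2 * t * Real.exp (-v / c) := by
  calc _ ≤ ∑ s ∈ Icc 1 t, P.real {ω | √(2 * v / s) ≤ |sampleMean Y s ω - m|} :=
        measureReal_biUnion_finset_le _ _
    _ ≤ ∑ s ∈ Icc 1 t, 2 * Real.exp (-v / c) := sum_le_sum fun s hs =>
        measureReal_le_abs_sampleMean_sub_le hindep hY (mem_Icc.1 hs).1 hv
    _ = 2 * t * Real.exp (-v / c) := by simp; ring

lemma integral_sq_le_of_le_add_card [IsProbabilityMeasure P] {Z : Ω → ℕ} {u K n : ℕ}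
    (hK : 1 ≤ K) {E : ℕ → Set Ω} [∀ t ω, Decidable (ω ∈ E t)] (hE : ∀ t, MeasurableSet (E t))
    (hZ : ∀ ω, Z ω ≤ u + #{t ∈ Ico K n | ω ∈ E t})
    (hPE : ∀ t ∈ Ico K n, P.real (E t) ≤ 4 * t / (t + 1) ^ 4) :
    ∫ ω, (Z ω : ℝ) ^ 2 ∂P ≤ u ^ 2 + 4 * u + 8 := by
  set bound : Ω → ℝ := fun ω =>
    u ^ 2 + ∑ t ∈ Ico K n, (E t).indicator (fun _ => 2 * (u : ℝ) + 2 * t + 1) ω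
  have hpoint : ∀ ω, (Z ω : ℝ) ^ 2 ≤ bound ω := by
    intro ω
    have h := sq_le_sq_add_sum_of_le_add_card (hZ ω)
    rw [sum_filter] at h
    simp only [bound, Set.indicator_apply]
    exact_mod_cast h
  have hbound : Integrable bound P :=
    (integrable_const _).add
      (integrable_finsetSum _ fun t _ => (integrable_const _).indicator (hE t))
  calc ∫ ω, (Z ω : ℝ) ^ 2 ∂P ≤ ∫ ω, bound ω ∂P :=
        integral_mono_of_nonneg (ae_of_all _ fun _ => sq_nonneg _) hbound (ae_of_all _ hpoint)
    _ = u ^ 2 + ∑ t ∈ Ico K n, (2 * (u : ℝ) + 2 * t + 1) * P.real (E t) := by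
        rw [integral_add (integrable_const _)
          (integrable_finsetSum _ fun t _ => (integrable_const _).indicator (hE t)),
          integral_const, integral_finsetSum _ fun t _ => (integrable_const _).indicator (hE t)]
        simp [integral_indicator_const _ (hE _), mul_comm]
    _ ≤ u ^ 2 + ∑ t ∈ Ico K n, (2 * (u : ℝ) + 2 * t + 1) * (4 * t / (t + 1) ^ 4) := by
        gcongr with t ht
        exact hPE t ht
    _ ≤ u ^ 2 + 4 * u + 8 := by
        have := sum_Ico_mul_four_mul_div_le hK n (Nat.cast_nonneg (α := ℝ) u)
        linarith

lemma measureReal_confidenceMiss_arm_le {K : ℕ} {μ γ : Fin K → ℝ} {X : Fin K → ℕ → Ω → ℝ}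
    (hmeas : ∀ k j, Measurable (X k j))
    (hindep : iIndepFun (fun p : Fin K × ℕ => X p.1 p.2) P)
    (hsub : ∀ k j, ∀ lam : ℝ,
      ∫⁻ ω, ENNReal.ofReal (Real.exp (lam * (X k j ω - μ k))) ∂P ≤
        ENNReal.ofReal (Real.exp (γ k ^ 2 * lam ^ 2 / 2)))
    {k : Fin K} (hγ : 0 < γ k) {t : ℕ} {v : ℝ} (hv : 4 * γ k ^ 2 * Real.log (t + 1) ≤ v) :
    P.real (confidenceMiss (X k) (μ k) v t) ≤ 2 * t / (t + 1) ^ 4 := by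
  have hγk : (↑(γ k ^ 2).toNNReal : ℝ) = γ k ^ 2 := Real.coe_toNNReal _ (sq_nonneg _)
  have hY : ∀ j, HasSubgaussianMGF (fun ω => X k j ω - μ k) (γ k ^ 2).toNNReal P := fun j =>
    hasSubgaussianMGF_of_lintegral_exp_le ((hmeas k j).sub_const _) (by simpa [hγk] using hsub k j)
  have hlog : 0 ≤ Real.log ((t : ℝ) + 1) := Real.log_nonneg (by linarith [t.cast_nonneg' (α := ℝ)])
  calc _ ≤ 2 * t * Real.exp (-v / (γ k ^ 2).toNNReal) :=
        measureReal_confidenceMiss_le (hindep.precomp (Prod.mk_right_injective k)) hY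
          (by nlinarith [pow_pos hγ 2]) t
    _ ≤ 2 * t * (((t : ℝ) + 1) ^ 4)⁻¹ := by
        rw [hγk]
        gcongr
        exact exp_neg_div_le_inv_pow_four (pow_pos hγ 2) (by positivity) hv
    _ = 2 * t / (t + 1) ^ 4 := by ring

lemma measureReal_late_pull_le {K : ℕ} {μ γ : Fin K → ℝ} {γbar : ℝ} {X : Fin K → ℕ → Ω → ℝ}
    {ν : ℕ → ℝ} {T : ℕ → Fin K → Ω → ℕ} {I : ℕ → Ω → Fin K}
    (hγpos : ∀ k, 0 < γ k) (hγbar : ∀ k, γ k ≤ γbar) (hmeas : ∀ k j, Measurable (X k j))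
    (hindep : iIndepFun (fun p : Fin K × ℕ => X p.1 p.2) P)
    (hsub : ∀ k j, ∀ lam : ℝ,
      ∫⁻ ω, ENNReal.ofReal (Real.exp (lam * (X k j ω - μ k))) ∂P ≤
        ENNReal.ofReal (Real.exp (γ k ^ 2 * lam ^ 2 / 2)))
    (hinit : ∀ k ω, T K k ω = 1)
    (hTrec : ∀ n, K ≤ n → ∀ k ω,
      T (n + 1) k ω = T n k ω + if I (n + 1) ω = k then 1 else 0)
    (hargmax : ∀ n, K ≤ n → ∀ ω k,
      (∑ j ∈ Finset.range (T n k ω), X k j ω) / (T n k ω : ℝ) +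
          Real.sqrt (2 * ν (n + 1) / (T n k ω : ℝ)) ≤
        (∑ j ∈ Finset.range (T n (I (n + 1) ω) ω), X (I (n + 1) ω) j ω) /
            (T n (I (n + 1) ω) ω : ℝ) +
          Real.sqrt (2 * ν (n + 1) / (T n (I (n + 1) ω) ω : ℝ)))
    (hν : ∀ n : ℕ, 4 * γbar ^ 2 * Real.log n ≤ ν n)
    {kstar k : Fin K} (hle : μ k ≤ μ kstar) {t u : ℕ} (ht : K ≤ t)
    (hu : 8 * ν (t + 1) ≤ (μ kstar - μ k) ^ 2 * u) :
    P.real {ω | I (t + 1) ω = k ∧ u ≤ T t k ω} ≤ 4 * t / (t + 1) ^ 4 := by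
  have := hindep.isProbabilityMeasure
  set miss := fun j => confidenceMiss (X j) (μ j) (ν (t + 1)) t
  have hcover : {ω | I (t + 1) ω = k ∧ u ≤ T t k ω} ⊆ miss kstar ∪ miss k := by
    rintro ω ⟨hI, hTu⟩
    by_contra hgood
    have hlt := sq_sub_mul_lt_of_notMem_confidenceMiss hinit hTrec hargmax hle ht hI hgood
    have hTu' : (u : ℝ) ≤ T t k ω := by exact_mod_cast hTu
    nlinarith [sq_nonneg (μ kstar - μ k)]
  have hmiss : ∀ j, P.real (miss j) ≤ 2 * t / (t + 1) ^ 4 := by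
    intro j
    refine measureReal_confidenceMiss_arm_le hmeas hindep hsub (hγpos j) ?_
    have hγ : γ j ^ 2 ≤ γbar ^ 2 := pow_le_pow_left₀ (hγpos j).le (hγbar j) 2
    have hlog : 0 ≤ Real.log ((t : ℝ) + 1) :=
      Real.log_nonneg (by linarith [t.cast_nonneg' (α := ℝ)])
    have := hν (t + 1)
    push_cast at this
    nlinarith
  calc _ ≤ P.real (miss kstar ∪ miss k) := measureReal_mono hcover
    _ ≤ P.real (miss kstar) + P.real (miss k) := measureReal_union_le _ _
    _ ≤ 2 * t / (t + 1) ^ 4 + 2 * t / (t + 1) ^ 4 := add_le_add (hmiss kstar) (hmiss k)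
    _ = 4 * t / (t + 1) ^ 4 := by ring

end SampleMean

theorem stmt_14_general
    {Ω : Type*} [MeasurableSpace Ω] (P : Measure Ω) [IsProbabilityMeasure P]
    (K : ℕ)
    (μ γ : Fin K → ℝ) (kstar : Fin K) (γbar : ℝ)
    (hγpos : ∀ k, 0 < γ k) (hγbar : ∀ k, γ k ≤ γbar)
    (hgap : ∀ k, k ≠ kstar → μ k < μ kstar)
    (X : Fin K → ℕ → Ω → ℝ)
    (hmeas : ∀ k j, Measurable (X k j))
    (hindep : iIndepFun (fun p : Fin K × ℕ => X p.1 p.2) P)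
    (hsub : ∀ k j, ∀ lam : ℝ,
      ∫⁻ ω, ENNReal.ofReal (Real.exp (lam * (X k j ω - μ k))) ∂P ≤
        ENNReal.ofReal (Real.exp (γ k ^ 2 * lam ^ 2 / 2)))
    (ν : ℕ → ℝ) (hνmono : Monotone ν)
    (T : ℕ → Fin K → Ω → ℕ) (I : ℕ → Ω → Fin K)
    (hTmeas : ∀ n k, Measurable (fun ω => T n k ω))
    (hImeas : ∀ n, Measurable (I n))
    (hinit : ∀ k ω, T K k ω = 1)
    (hTrec : ∀ n, K ≤ n → ∀ k ω,
      T (n + 1) k ω = T n k ω + if I (n + 1) ω = k then 1 else 0)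
    (hargmax : ∀ n, K ≤ n → ∀ ω k,
      (∑ j ∈ Finset.range (T n k ω), X k j ω) / (T n k ω : ℝ) +
          Real.sqrt (2 * ν (n + 1) / (T n k ω : ℝ)) ≤
        (∑ j ∈ Finset.range (T n (I (n + 1) ω) ω), X (I (n + 1) ω) j ω) /
            (T n (I (n + 1) ω) ω : ℝ) +
          Real.sqrt (2 * ν (n + 1) / (T n (I (n + 1) ω) ω : ℝ)))
    (hν : ∀ n : ℕ, 4 * γbar ^ 2 * Real.log n ≤ ν n) :
    ∀ k, k ≠ kstar → ∀ n, K ≤ n →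
      (∫ ω, ((T n k ω : ℝ)) ^ 2 ∂P) ≤ (8 * ν n / (μ kstar - μ k) ^ 2 + 5) ^ 2 := by
  intro k hk n hn
  have hK : 1 ≤ K := k.pos
  have hΔ : 0 < μ kstar - μ k := sub_pos.2 (hgap k hk)
  have hνn : 0 ≤ ν n := by
    have := Real.log_nonneg (Nat.one_le_cast.2 (hK.trans hn) : (1 : ℝ) ≤ n)
    nlinarith [hν n, sq_nonneg γbar]
  set x := 8 * ν n / (μ kstar - μ k) ^ 2
  have hx : 0 ≤ x := by positivity
  set u := ⌊x⌋₊ + 1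
  have hxu : x < u := by push_cast [u]; exact Nat.lt_floor_add_one x
  have hu : 8 * ν n ≤ (μ kstar - μ k) ^ 2 * u := by
    rw [← div_le_iff₀' (by positivity)]; exact hxu.le
  have hcount : ∀ ω, T n k ω ≤ u + #{t ∈ Ico K n | I (t + 1) ω = k ∧ u ≤ T t k ω} := fun ω =>
    le_add_card_filter_of_succ_eq_add_ite (f := fun t => T t k ω) (by simp [hinit, u])
      (fun m hm => hTrec m hm k ω) n hn
  have hlate : ∀ t ∈ Ico K n, P.real {ω | I (t + 1) ω = k ∧ u ≤ T t k ω} ≤ 4 * t / (t + 1) ^ 4 :=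
    fun t ht => measureReal_late_pull_le hγpos hγbar hmeas hindep hsub hinit hTrec hargmax hν
      (hgap k hk).le (mem_Ico.1 ht).1 (by linarith [hνmono (mem_Ico.1 ht).2])
  calc ∫ ω, ((T n k ω : ℝ)) ^ 2 ∂P ≤ u ^ 2 + 4 * u + 8 :=
        integral_sq_le_of_le_add_card hK (E := fun t => {ω | I (t + 1) ω = k ∧ u ≤ T t k ω})
          (fun t => (hImeas _ (measurableSet_singleton k)).inter (hTmeas t k measurableSet_Ici))
          hcount hlate
    _ ≤ (x + 5) ^ 2 := by
        have : (u : ℝ) ≤ x + 1 := by push_cast [u]; linarith [Nat.floor_le hx]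
        nlinarith

theorem stmt_14
    {Ω : Type*} [MeasurableSpace Ω] (P : Measure Ω) [IsProbabilityMeasure P]
    (K : ℕ) (hK : 1 ≤ K)
    (μ γ : Fin K → ℝ) (kstar : Fin K) (γbar : ℝ)
    (hγpos : ∀ k, 0 < γ k) (hγbar : ∀ k, γ k ≤ γbar)
    (hgap : ∀ k, k ≠ kstar → μ k < μ kstar)
    (X : Fin K → ℕ → Ω → ℝ)
    (hmeas : ∀ k j, Measurable (X k j))
    (hindep : iIndepFun (fun p : Fin K × ℕ => X p.1 p.2) P)
    (hident : ∀ k j, IdentDistrib (X k j) (X k 0) P P)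
    (hint : ∀ k j, Integrable (X k j) P)
    (hmean : ∀ k, ∫ ω, X k 0 ω ∂P = μ k)
    (hsub : ∀ k j, ∀ lam : ℝ,
      ∫⁻ ω, ENNReal.ofReal (Real.exp (lam * (X k j ω - μ k))) ∂P ≤
        ENNReal.ofReal (Real.exp (γ k ^ 2 * lam ^ 2 / 2)))
    (ν : ℕ → ℝ) (hνmono : Monotone ν)
    (T : ℕ → Fin K → Ω → ℕ) (I : ℕ → Ω → Fin K)
    (hTmeas : ∀ n k, Measurable (fun ω => T n k ω))
    (hImeas : ∀ n, Measurable (I n))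
    (hinit : ∀ k ω, T K k ω = 1)
    (hTrec : ∀ n, K ≤ n → ∀ k ω,
      T (n + 1) k ω = T n k ω + if I (n + 1) ω = k then 1 else 0)
    (hargmax : ∀ n, K ≤ n → ∀ ω k,
      (∑ j ∈ Finset.range (T n k ω), X k j ω) / (T n k ω : ℝ) +
          Real.sqrt (2 * ν (n + 1) / (T n k ω : ℝ)) ≤
        (∑ j ∈ Finset.range (T n (I (n + 1) ω) ω), X (I (n + 1) ω) j ω) /
            (T n (I (n + 1) ω) ω : ℝ) +
          Real.sqrt (2 * ν (n + 1) / (T n (I (n + 1) ω) ω : ℝ)))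
    (hν : ∀ n : ℕ, 4 * γbar ^ 2 * Real.log n ≤ ν n) :
    ∀ k, k ≠ kstar → ∀ n, K ≤ n →
      (∫ ω, ((T n k ω : ℝ)) ^ 2 ∂P) ≤ (8 * ν n / (μ kstar - μ k) ^ 2 + 5) ^ 2 :=
  stmt_14_general P K μ γ kstar γbar hγpos hγbar hgap X hmeas hindep hsub ν hνmono T I hTmeas hImeas
    hinit hTrec hargmax hν
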